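/- Let X and Y be realcompact (completely regular Hausdorff) spaces and let E and F be nontrivial Hausdorff topological real vector spaces. Suppose T : C(X,E) → C(Y,F) is a vector space isomorphism (linear bijection) that preserves common zeros. Then there are a homeomorphism h : Y → X and, for each y ∈ Y, a vector space isomorphism S_y : E → F such that Tf(y) = S_y(f(h(y))) for all f ∈ C(X,E) and all y ∈ Y. Conversely, if a vector space isomorphism T : C(X,E) → C(Y,F) has this form for some homeomorphism h : Y → X and linear isomorphisms S_y, then T preserves common zeros. -/

import Mathlib

open Set Filter Topology

/-- A map `T` between `C(X,E)` and `C(Y,F)` preserves common zeros if for every `k ∈ ℕ` and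
every finite family `f₁, …, f_k` in `C(X,E)`, the zero sets of the `fᵢ` have a common point
iff the zero sets of the `T fᵢ` do. -/
def PreservesCommonZerosC {X Y E F : Type*} [TopologicalSpace X] [TopologicalSpace Y]
    [TopologicalSpace E] [Zero E] [TopologicalSpace F] [Zero F]
    (T : C(X, E) → C(Y, F)) : Prop :=
  ∀ (k : ℕ) (f : Fin (k + 1) → C(X, E)),
    (⋂ i, {x | f i x = 0}).Nonempty ↔ (⋂ i, {y | T (f i) y = 0}).Nonempty

/-- The unique continuous extension `ψ* : βY → ℝ ∪ {∞}` of `ψ ∈ C(Y)` with values in the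
one-point compactification of `ℝ`. -/
noncomputable def onePointExt {Y : Type*} [TopologicalSpace Y] (ψ : C(Y, ℝ)) :
    StoneCech Y → OnePoint ℝ :=
  stoneCechExtend (OnePoint.continuous_coe.comp ψ.continuous)

/-- The Hewitt realcompactification `υY ⊆ βY`: the set of points of `βY` at which the
extension of every real-valued continuous function on `Y` takes a finite value. -/
def hewittRealcompactification (Y : Type*) [TopologicalSpace Y] : Set (StoneCech Y) :=
  {p | ∀ ψ : C(Y, ℝ), onePointExt ψ p ≠ OnePoint.infty}

/-- A completely regular Hausdorff space is realcompact if the image of the canonical map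
`ι_X : X → βX` is exactly the Hewitt realcompactification `υX`. -/
def Realcompact (X : Type*) [TopologicalSpace X] : Prop :=
  Set.range (stoneCechUnit : X → StoneCech X) = hewittRealcompactification X

/-!
Fix `y₀ ∈ Y`. Because `T` preserves common zeros, the zero sets of the functions `f` with
`T f y₀ = 0` have the finite intersection property, so they all belong to one ultrafilter `U`
on `X`. Along `U` every `f` agrees with `T⁻¹ (const (T f y₀))`, and `T⁻¹ (const w)` has no zero
unless `w = 0`; together with linearity this forces every real-valued continuous function to be
eventually constant along `U`. Then `U` converges in `βX` to a point of `υX = X`, at which every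
such `f` vanishes. This gives the support map `Y → X`; the same construction for `T⁻¹` inverts
it, and both are continuous because a closed set of a completely regular space is an
intersection of zero sets. Finally `T f y` depends only on `f (h y)`, so `S_y v = T (const v) y`.
-/

section

variable {X Y E F : Type*} [TopologicalSpace X] [TopologicalSpace Y]

namespace PreservesCommonZerosC

variable [TopologicalSpace E] [Zero E] [TopologicalSpace F] [Zero F]

theorem nonempty_iInter_iff {T : C(X, E) → C(Y, F)} (hT : PreservesCommonZerosC T)
    (hT0 : T 0 = 0) {ι : Type*} [Finite ι] (f : ι → C(X, E)) :
    (⋂ i, {x | f i x = 0}).Nonempty ↔ (⋂ i, {y | T (f i) y = 0}).Nonempty := by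
  obtain ⟨n, ⟨e⟩⟩ := Finite.exists_equiv_fin ι
  convert hT n (Fin.cons 0 (f ∘ e.symm)) using 2 <;>
    ext <;> simp [Fin.forall_fin_succ, hT0, e.symm.forall_congr_left]

theorem symm {T : C(X, E) ≃ C(Y, F)} (hT : PreservesCommonZerosC T) :
    PreservesCommonZerosC T.symm := fun k g => by
  simpa using (hT k (T.symm ∘ g)).symm

end PreservesCommonZerosC

section Separation

variable [AddCommMonoid E] [Module ℝ E] [TopologicalSpace E] [ContinuousSMul ℝ E] [Nontrivial E]

theorem exists_continuousMap_eqOn_zero_apply_ne_zero [CompletelyRegularSpace X] {C : Set X}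
    (hC : IsClosed C) {x : X} (hx : x ∉ C) : ∃ f : C(X, E), EqOn f 0 C ∧ f x ≠ 0 := by
  obtain ⟨φ, hφ, hφx, hφC⟩ := CompletelyRegularSpace.completely_regular x C hC hx
  obtain ⟨e, he⟩ := exists_ne (0 : E)
  refine ⟨⟨fun z => (1 - (φ z : ℝ)) • e, by fun_prop⟩, fun z hz => ?_, ?_⟩
  · simp [hφC hz]
  · simpa [hφx] using he

theorem eq_of_forall_apply_eq_zero_imp [T1Space X] [CompletelyRegularSpace X] {x x' : X}
    (h : ∀ f : C(X, E), f x = 0 → f x' = 0) : x' = x := by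
  by_contra hne
  obtain ⟨f, hf, hfx'⟩ := exists_continuousMap_eqOn_zero_apply_ne_zero (E := E)
    isClosed_singleton hne
  exact hfx' (h f (hf rfl))

theorem continuous_of_apply_eq_zero_iff [CompletelyRegularSpace X] [Zero F] [TopologicalSpace F]
    [T1Space F] (A : C(X, E) → C(Y, F)) (φ : Y → X)
    (hA : ∀ f y, A f y = 0 ↔ f (φ y) = 0) : Continuous φ := by
  refine continuous_iff_isClosed.2 fun C hC => ?_
  have : φ ⁻¹' C = ⋂ (f : C(X, E)) (_ : EqOn f 0 C), {y | A f y = 0} := by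
    ext y
    simp only [mem_preimage, mem_iInter, mem_ofPred_eq, hA]
    refine ⟨fun hy f hf => hf hy, fun hy => by_contra fun hyC => ?_⟩
    obtain ⟨f, hf, hfy⟩ := exists_continuousMap_eqOn_zero_apply_ne_zero (E := E) hC hyC
    exact hfy (hy f hf)
  rw [this]
  exact isClosed_iInter fun f => isClosed_iInter fun _ =>
    isClosed_singleton.preimage (A f).continuous

end Separation

theorem Realcompact.exists_le_nhds [CompletelyRegularSpace X] (hX : Realcompact X)
    (U : Ultrafilter X) (hU : ∀ ψ : C(X, ℝ), ∃ M, ∀ᶠ x in U, |ψ x| ≤ M) :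
    ∃ x, (U : Filter X) ≤ 𝓝 x := by
  obtain ⟨p, -, hp⟩ := isCompact_univ.ultrafilter_le_nhds (U.map stoneCechUnit) (by simp)
  have hpυ : p ∈ hewittRealcompactification X := fun ψ hψ => by
    obtain ⟨M, hM⟩ := hU ψ
    have hlim : Tendsto (fun x => (ψ x : OnePoint ℝ)) (U : Filter X) (𝓝 (onePointExt ψ p)) := by
      have := ((continuous_stoneCechExtend (OnePoint.continuous_coe.comp ψ.continuous)).tendsto
        p).comp hp
      rwa [stoneCechExtend_extends] at this
    have hK : IsClosed (((↑) : ℝ → OnePoint ℝ) '' Icc (-M) M) :=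
      (isCompact_Icc.image OnePoint.continuous_coe).isClosed
    obtain ⟨r, -, hr⟩ := hK.mem_of_tendsto hlim (hM.mono fun x hx => ⟨ψ x, abs_le.1 hx, rfl⟩)
    exact OnePoint.coe_ne_infty r (hr.trans hψ)
  obtain ⟨x, rfl⟩ : p ∈ range stoneCechUnit := hX ▸ hpυ
  exact ⟨x, isInducing_stoneCechUnit.tendsto_nhds_iff.2 hp⟩

theorem PreservesCommonZerosC.exists_ultrafilter_forall_mem [TopologicalSpace E] [Zero E]
    [TopologicalSpace F] [Zero F] {T : C(X, E) → C(Y, F)} (hT : PreservesCommonZerosC T)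
    (hT0 : T 0 = 0) (y₀ : Y) :
    ∃ U : Ultrafilter X, ∀ f, T f y₀ = 0 → {x | f x = 0} ∈ U := by
  obtain ⟨U, hU⟩ := Ultrafilter.exists_ultrafilter_of_finite_inter_nonempty
    {s | ∃ f, T f y₀ = 0 ∧ {x | f x = 0} = s} fun t ht => by
      choose f hf hfs using fun s : (t : Set (Set X)) => ht s.2
      rw [sInter_eq_iInter]
      simpa only [hfs] using (hT.nonempty_iInter_iff hT0 f).2 ⟨y₀, mem_iInter.2 hf⟩
  exact ⟨U, fun f hf => hU ⟨f, hf, rfl⟩⟩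

section KernelUltrafilter

variable [AddCommGroup E] [Module ℝ E] [TopologicalSpace E] [IsTopologicalAddGroup E]
  [ContinuousSMul ℝ E] [AddCommGroup F] [Module ℝ F] [TopologicalSpace F]
  [IsTopologicalAddGroup F] [ContinuousConstSMul ℝ F] {T : C(X, E) ≃ₗ[ℝ] C(Y, F)}

open ContinuousMap (const const_apply)

theorem PreservesCommonZerosC.eq_zero_of_symm_const_apply_eq_zero
    (hT : PreservesCommonZerosC T) {w : F} {x : X} (hx : T.symm (const Y w) x = 0) : w = 0 := by
  obtain ⟨y, hy⟩ := (hT.nonempty_iInter_iff (map_zero T) fun _ : Unit => T.symm (const Y w)).1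
    ⟨x, by simpa using hx⟩
  simpa using hy

variable {y₀ : Y} {U : Ultrafilter X}

theorem eventually_apply_eq_symm_const (hU : ∀ f, T f y₀ = 0 → {x | f x = 0} ∈ U)
    (f : C(X, E)) : ∀ᶠ x in U, f x = T.symm (const Y (T f y₀)) x := by
  filter_upwards [hU (f - T.symm (const Y (T f y₀))) (by simp)] with x hx
  exact sub_eq_zero.1 hx

theorem exists_eventually_eq [Nontrivial E] (hT : PreservesCommonZerosC T)
    (hU : ∀ f, T f y₀ = 0 → {x | f x = 0} ∈ U) (χ : C(X, ℝ)) : ∃ s, ∀ᶠ x in U, χ x = s := by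
  obtain ⟨e, he⟩ := exists_ne (0 : E)
  let A : F →ₗ[ℝ] C(X, E) := T.symm.toLinearMap ∘ₗ (ContinuousLinearMap.const ℝ Y).toLinearMap
  have hA : ∀ w x, A w x = T.symm (const Y w) x := fun _ _ => rfl
  let χe : C(X, E) := ⟨fun x => χ x • e, by fun_prop⟩
  have h := (eventually_apply_eq_symm_const hU (const X e)).and
    (eventually_apply_eq_symm_const hU χe)
  simp only [const_apply, ← hA] at h
  obtain ⟨x₁, he₁, hχ₁⟩ := h.exists
  have hv : T χe y₀ = χ x₁ • T (const X e) y₀ := by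
    refine sub_eq_zero.1 (hT.eq_zero_of_symm_const_apply_eq_zero (x := x₁) ?_)
    rw [← hA, map_sub, map_smul, ContinuousMap.sub_apply, ContinuousMap.smul_apply, ← hχ₁, ← he₁]
    exact sub_self _
  refine ⟨χ x₁, h.mono fun x ⟨hex, hχx⟩ => smul_left_injective ℝ he ?_⟩
  calc χ x • e = A (T χe y₀) x := hχx
    _ = χ x₁ • e := by rw [hv, map_smul, ContinuousMap.smul_apply, ← hex]

end KernelUltrafilter

section Representation

variable [AddCommGroup E] [Module ℝ E] [TopologicalSpace E] [IsTopologicalAddGroup E]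
  [ContinuousSMul ℝ E] [AddCommGroup F] [Module ℝ F] [TopologicalSpace F]
  [IsTopologicalAddGroup F] [ContinuousSMul ℝ F] {T : C(X, E) ≃ₗ[ℝ] C(Y, F)}

theorem PreservesCommonZerosC.exists_forall_apply_eq_zero [CompletelyRegularSpace X]
    [T1Space E] [Nontrivial E] (hX : Realcompact X) (hT : PreservesCommonZerosC T) (y₀ : Y) :
    ∃ x₀, ∀ f : C(X, E), T f y₀ = 0 → f x₀ = 0 := by
  obtain ⟨U, hU⟩ := hT.exists_ultrafilter_forall_mem (map_zero T) y₀
  obtain ⟨x₀, hx₀⟩ := hX.exists_le_nhds U fun ψ => by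
    obtain ⟨s, hs⟩ := exists_eventually_eq hT hU ψ
    exact ⟨|s|, hs.mono fun x hx => hx ▸ le_rfl⟩
  exact ⟨x₀, fun f hf => (isClosed_singleton.preimage f.continuous).mem_of_tendsto hx₀ (hU f hf)⟩

theorem PreservesCommonZerosC.exists_homeomorph_apply_eq_zero_iff [T1Space X]
    [CompletelyRegularSpace X] [T1Space Y] [CompletelyRegularSpace Y] [T1Space E] [Nontrivial E]
    [T1Space F] [Nontrivial F] (hX : Realcompact X) (hY : Realcompact Y)
    (hT : PreservesCommonZerosC T) : ∃ h : Y ≃ₜ X, ∀ f y, T f y = 0 ↔ f (h y) = 0 := by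
  choose φ hφ using hT.exists_forall_apply_eq_zero hX
  choose ψ hψ using (hT.symm (T := T.toEquiv)).exists_forall_apply_eq_zero (T := T.symm) hY
  have hψφ : ∀ y, ψ (φ y) = y := fun y =>
    eq_of_forall_apply_eq_zero_imp fun g hg => hψ _ _ (hφ _ _ (by simpa using hg))
  have hφψ : ∀ x, φ (ψ x) = x := fun x =>
    eq_of_forall_apply_eq_zero_imp fun f hf => hφ _ _ (hψ _ _ (by simpa using hf))
  have hφ' : ∀ f y, T f y = 0 ↔ f (φ y) = 0 := fun f y =>
    ⟨hφ y f, fun hf => hψφ y ▸ hψ _ (T f) (by simpa using hf)⟩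
  have hψ' : ∀ g x, T.symm g x = 0 ↔ g (ψ x) = 0 := fun g x =>
    ⟨hψ x g, fun hg => hφψ x ▸ hφ _ (T.symm g) (by simpa using hg)⟩
  exact ⟨{ toFun := φ, invFun := ψ, left_inv := hψφ, right_inv := hφψ
           continuous_toFun := continuous_of_apply_eq_zero_iff _ _ hφ'
           continuous_invFun := continuous_of_apply_eq_zero_iff _ _ hψ' }, hφ'⟩

end Representation

theorem exists_linearEquiv_apply_eq_of_apply_eq_zero_iff {R : Type*} [Ring R] [AddCommGroup E]
    [Module R E] [TopologicalSpace E] [IsTopologicalAddGroup E] [ContinuousConstSMul R E]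
    [AddCommGroup F] [Module R F] [TopologicalSpace F] [IsTopologicalAddGroup F]
    [ContinuousConstSMul R F] (T : C(X, E) ≃ₗ[R] C(Y, F)) (h : Y → X)
    (hT : ∀ f y, T f y = 0 ↔ f (h y) = 0) :
    ∃ S : Y → E ≃ₗ[R] F, ∀ f y, T f y = S y (f (h y)) := by
  let L (y : Y) : E →ₗ[R] F := (ContinuousMap.evalCLM R y).toLinearMap ∘ₗ T.toLinearMap ∘ₗ
    (ContinuousLinearMap.const R X).toLinearMap
  have hL_apply : ∀ y v, L y v = T (.const X v) y := fun _ _ => rfl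
  have hL : ∀ f y, T f y = L y (f (h y)) := fun f y => by
    rw [hL_apply]
    exact sub_eq_zero.1 <| by simpa using (hT (f - .const X (f (h y))) y).2 (by simp)
  refine ⟨fun y => .ofBijective (L y) ⟨?_, fun w => ⟨T.symm (.const Y w) (h y), ?_⟩⟩, hL⟩
  · refine (injective_iff_map_eq_zero _).2 fun v hv => ?_
    simpa using (hT (.const X v) y).1 hv
  · simpa using (hL (T.symm (.const Y w)) y).symm

theorem preservesCommonZerosC_of_apply_eq {R : Type*} [Semiring R] [TopologicalSpace E]
    [AddCommMonoid E] [Module R E] [TopologicalSpace F] [AddCommMonoid F] [Module R F]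
    {T : C(X, E) → C(Y, F)} (h : Y ≃ X) (S : Y → E ≃ₗ[R] F)
    (hS : ∀ f y, T f y = S y (f (h y))) : PreservesCommonZerosC T := by
  refine fun k f => ⟨fun ⟨x, hx⟩ => ⟨h.symm x, ?_⟩, fun ⟨y, hy⟩ => ⟨h y, ?_⟩⟩ <;>
    simp_all

end

theorem thm4 {X Y E F : Type*}
    [TopologicalSpace X] [T2Space X] [CompletelyRegularSpace X]
    [TopologicalSpace Y] [T2Space Y] [CompletelyRegularSpace Y]
    (hX : Realcompact X) (hY : Realcompact Y)
    [AddCommGroup E] [Module ℝ E] [TopologicalSpace E] [IsTopologicalAddGroup E]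
    [ContinuousSMul ℝ E] [T2Space E] [Nontrivial E]
    [AddCommGroup F] [Module ℝ F] [TopologicalSpace F] [IsTopologicalAddGroup F]
    [ContinuousSMul ℝ F] [T2Space F] [Nontrivial F]
    (T : C(X, E) ≃ₗ[ℝ] C(Y, F)) :
    PreservesCommonZerosC (T : C(X, E) → C(Y, F)) ↔
      ∃ (h : Y ≃ₜ X) (S : Y → (E ≃ₗ[ℝ] F)),
        ∀ (f : C(X, E)) (y : Y), T f y = S y (f (h y)) := by
  refine ⟨fun hT => ?_, fun ⟨h, S, hS⟩ => preservesCommonZerosC_of_apply_eq h.toEquiv S hS⟩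
  obtain ⟨h, hh⟩ := hT.exists_homeomorph_apply_eq_zero_iff hX hY
  exact ⟨h, exists_linearEquiv_apply_eq_of_apply_eq_zero_iff T h hh⟩
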